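/- Let D₀ ∈ E^n, i < j, and let X₀ = K_V†(D₀) ∈ S^{n-1}_+ and Y = K_V*(E_{ij}) ∈ S^{n-1}_+. Then Y X₀ = 0 if and only if trace(D₀ E_{ij}) = 0, i.e., if and only if (D₀)_{ij} = 0. -/

import Mathlib

/-!
With `u = e_i - e_j` one has `K*(E_ij) = 2 u uᵀ`, so `Y = 2 w wᵀ` for `w = Vᵀ u`, while
`(D₀)_ij = K(V X₀ Vᵀ)_ij = uᵀ V X₀ Vᵀ u = wᵀ X₀ w`. For positive semidefinite `X₀`,
`wᵀ X₀ w = 0` forces `X₀ w = 0`, hence `w wᵀ X₀ = 0`; conversely the trace of `w wᵀ X₀` is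
`wᵀ X₀ w`. Finally `trace(D₀ E_ij) = 2 (D₀)_ij` because `D₀` is symmetric.
-/

open Matrix BigOperators

noncomputable section

def IsEDM {n : ℕ} (D : Matrix (Fin n) (Fin n) ℝ) : Prop :=
  ∃ (d : ℕ) (p : Fin n → Fin d → ℝ), ∀ i j, D i j = ∑ t, (p i t - p j t) ^ 2

def unitMat {n : ℕ} (i j : Fin n) : Matrix (Fin n) (Fin n) ℝ :=
  Matrix.single i j 1 + Matrix.single j i 1

def lind {ι : Type*} [Fintype ι] (M : Matrix ι ι ℝ) : Matrix ι ι ℝ :=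
  Matrix.of fun i j => M i i + M j j - 2 * M i j

/-- `K*(D) = 2(Diag(De) - D)`. -/
def lindAdj {ι : Type*} [Fintype ι] [DecidableEq ι] (D : Matrix ι ι ℝ) : Matrix ι ι ℝ :=
  (2 : ℝ) • (Matrix.diagonal (D *ᵥ fun _ => (1 : ℝ)) - D)

section

variable {ι κ : Type*} [Fintype ι]

lemma lindAdj_unitMat {n : ℕ} (i j : Fin n) :
    lindAdj (unitMat i j) =
      (2 : ℝ) • vecMulVec (Pi.single i 1 - Pi.single j 1) (Pi.single i 1 - Pi.single j 1) := by
  ext a b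
  simp only [lindAdj, unitMat, Matrix.smul_apply, Matrix.sub_apply, diagonal_apply,
    vecMulVec_apply, add_mulVec, single_mulVec, Matrix.add_apply, single_apply, Pi.sub_apply,
    Pi.single_apply, Pi.add_apply, Function.update_apply, smul_eq_mul]
  by_cases hai : a = i <;> by_cases haj : a = j <;> by_cases hbi : b = i <;>
    by_cases hbj : b = j <;> simp_all [eq_comm]

lemma trace_mul_unitMat {n : ℕ} (A : Matrix (Fin n) (Fin n) ℝ) (i j : Fin n) :
    trace (A * unitMat i j) = A j i + A i j := by
  rw [unitMat, mul_add, trace_add, trace_mul_single, trace_mul_single, MulOpposite.op_one,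
    one_smul, one_smul]

lemma lind_isSymm {M : Matrix ι ι ℝ} (hM : M.IsSymm) : (lind M).IsSymm :=
  IsSymm.ext fun a b => by
    simp only [lind, of_apply, hM.apply a b]
    ring

lemma lind_apply_of_isSymm [DecidableEq ι] {M : Matrix ι ι ℝ} (hM : M.IsSymm) (i j : ι) :
    lind M i j = (Pi.single i 1 - Pi.single j 1) ⬝ᵥ M *ᵥ (Pi.single i 1 - Pi.single j 1) := by
  simp only [lind, of_apply, mulVec_sub, sub_dotProduct, dotProduct_sub, mulVec_single_one,
    single_dotProduct, one_mul, col_apply, hM.apply i j]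
  ring

lemma Matrix.PosSemidef.isSymm_mul_mul_transpose [Fintype κ] {X : Matrix κ κ ℝ}
    (hX : X.PosSemidef) (V : Matrix ι κ ℝ) : (V * X * Vᵀ).IsSymm := by
  simpa using (hX.mul_mul_conjTranspose_same V).1

lemma transpose_mul_vecMulVec_self_mul (V : Matrix ι κ ℝ) (u : ι → ℝ) :
    Vᵀ * vecMulVec u u * V = vecMulVec (Vᵀ *ᵥ u) (Vᵀ *ᵥ u) := by
  rw [mul_vecMulVec, vecMulVec_mul, mulVec_transpose]

lemma dotProduct_mul_mul_transpose_mulVec [Fintype κ] (V : Matrix ι κ ℝ) (X : Matrix κ κ ℝ)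
    (u : ι → ℝ) : u ⬝ᵥ (V * X * Vᵀ) *ᵥ u = (Vᵀ *ᵥ u) ⬝ᵥ X *ᵥ (Vᵀ *ᵥ u) := by
  rw [← mulVec_mulVec, ← mulVec_mulVec, dotProduct_mulVec u V, mulVec_transpose]

lemma vecMulVec_self_mul_eq_zero_iff {X : Matrix ι ι ℝ} (hX : X.PosSemidef) (w : ι → ℝ) :
    vecMulVec w w * X = 0 ↔ w ⬝ᵥ X *ᵥ w = 0 := by
  rw [vecMulVec_mul]
  constructor
  · intro h
    simpa [dotProduct_mulVec, dotProduct_comm] using congrArg trace h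
  · intro h
    have hXw : X *ᵥ w = 0 := (hX.dotProduct_mulVec_zero_iff w).mp (by simpa using h)
    rw [← mulVec_transpose, ← conjTranspose_eq_transpose_of_trivial, hX.1.eq, hXw,
      vecMulVec_zero]

end

theorem YX0_orthogonality_general (n : ℕ) (D₀ : Matrix (Fin n) (Fin n) ℝ)
    (i j : Fin n)
    (V : Matrix (Fin n) (Fin (n - 1)) ℝ)
    (X₀ : Matrix (Fin (n - 1)) (Fin (n - 1)) ℝ) (hX₀ : X₀.PosSemidef)
    (hKX₀ : lind (V * X₀ * Vᵀ) = D₀)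
    (Y : Matrix (Fin (n - 1)) (Fin (n - 1)) ℝ)
    (hY : Y = Vᵀ * lindAdj (unitMat i j) * V) :
    (Y * X₀ = 0 ↔ Matrix.trace (D₀ * unitMat i j) = 0) ∧
    (Y * X₀ = 0 ↔ D₀ i j = 0) := by
  set w := Vᵀ *ᵥ (Pi.single i 1 - Pi.single j 1 : Fin n → ℝ)
  have hM := hX₀.isSymm_mul_mul_transpose V
  have hYw : Y = (2 : ℝ) • vecMulVec w w := by
    rw [hY, lindAdj_unitMat, Matrix.mul_smul, Matrix.smul_mul, transpose_mul_vecMulVec_self_mul]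
  have hDw : D₀ i j = w ⬝ᵥ X₀ *ᵥ w := by
    rw [← hKX₀, lind_apply_of_isSymm hM, dotProduct_mul_mul_transpose_mulVec]
  have hYX₀ : Y * X₀ = 0 ↔ D₀ i j = 0 := by
    rw [hYw, smul_mul, smul_eq_zero, vecMulVec_self_mul_eq_zero_iff hX₀, hDw]
    norm_num
  have htrace : trace (D₀ * unitMat i j) = 2 * D₀ i j := by
    rw [trace_mul_unitMat, ← hKX₀, (lind_isSymm hM).apply]
    ring
  exact ⟨hYX₀.trans (by rw [htrace]; norm_num), hYX₀⟩

/-- For `X₀ = K_V†(D₀) ⪰ 0` and `Y = K_V*(E_{ij}) ⪰ 0`: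
`Y X₀ = 0 ⟺ trace(D₀ E_{ij}) = 0 ⟺ (D₀)_{ij} = 0`. -/
theorem YX0_orthogonality (n : ℕ) (D₀ : Matrix (Fin n) (Fin n) ℝ)
    (hD₀ : IsEDM D₀) (i j : Fin n) (hij : i < j)
    (V : Matrix (Fin n) (Fin (n - 1)) ℝ)
    (hV : Vᵀ * V = 1) (hVe : Vᵀ *ᵥ (fun _ => (1 : ℝ)) = 0)
    (X₀ : Matrix (Fin (n - 1)) (Fin (n - 1)) ℝ) (hX₀ : X₀.PosSemidef)
    (hKX₀ : lind (V * X₀ * Vᵀ) = D₀)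
    (Y : Matrix (Fin (n - 1)) (Fin (n - 1)) ℝ)
    (hY : Y = Vᵀ * lindAdj (unitMat i j) * V) :
    (Y * X₀ = 0 ↔ Matrix.trace (D₀ * unitMat i j) = 0) ∧
    (Y * X₀ = 0 ↔ D₀ i j = 0) :=
  YX0_orthogonality_general n D₀ i j V X₀ hX₀ hKX₀ Y hY
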